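/- arXiv:1304.0808 — 2 statements merged into one kernel-verified Lean document; each statement's English description precedes it below -/
import Mathlib

section
/- Let X be a metric space and ε > 0. If α = {x₀,...,xₙ} is an ε-chain (i.e., d(x_i, x_{i+1}) < ε for all i) and β = {x₀ = y₀,...,yₙ = xₙ} is a sequence of points with the same endpoints such that max_i d(x_i, y_i) < E(α)/2, where E(α) := min_i (ε - d(x_i, x_{i+1})), then β is also an ε-chain and β is ε-homotopic to α. -/
/-!
Proof idea: with `e := E(α)`, every step of `α` is at most `ε - e` and every `y_i` lies within
`e / 2` of `x_i`, so by the triangle inequality `β` is an `ε`-chain, and so are the hybrid chains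
`x₀, y₁, …, y_i, x_i, x_{i+1}, …, xₙ` and `x₀, y₁, …, y_i, x_{i+1}, …, xₙ`.
Hence `α` is deformed into `β` by inserting `y_i` before `x_i` and then removing `x_i`,
for `i = 1, …, n - 1`.
-/

noncomputable section
open Metric

variable {X : Type*} [MetricSpace X]

def IsEpsChain (ε : ℝ) (l : List X) : Prop :=
  l ≠ [] ∧ l.Chain' (fun a b => dist a b < ε)

def chainLength : List X → ℝ
  | a :: b :: t => dist a b + chainLength (b :: t)
  | _ => 0

def conc (α β : List X) : List X := α ++ β.tail

def Insertion (α β : List X) : Prop :=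
  ∃ (p s : List X) (x : X), p ≠ [] ∧ s ≠ [] ∧ α = p ++ s ∧ β = p ++ x :: s

def Move (ε : ℝ) (α β : List X) : Prop :=
  IsEpsChain ε α ∧ IsEpsChain ε β ∧ (Insertion α β ∨ Insertion β α)

def EpsHomotopic (ε : ℝ) : List X → List X → Prop :=
  Relation.ReflTransGen (Move ε)

def IsEpsNull (ε : ℝ) (l : List X) : Prop := ∃ x, EpsHomotopic ε l [x]

def IsGeodesicSpace (Y : Type*) [MetricSpace Y] : Prop :=
  ∀ x y : Y, ∃ γ : ℝ → Y, γ 0 = x ∧ γ (dist x y) = y ∧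
    ∀ s ∈ Set.Icc (0:ℝ) (dist x y), ∀ t ∈ Set.Icc (0:ℝ) (dist x y),
      dist (γ s) (γ t) = |s - t|

def ChainConnected (Y : Type*) [MetricSpace Y] : Prop :=
  ∀ ε > (0:ℝ), ∀ x y : Y, ∃ l : List Y, IsEpsChain ε l ∧ l.head? = some x ∧ l.getLast? = some y

theorem epsHomotopic_equiv (ε : ℝ) : Equivalence (EpsHomotopic (X := X) ε) := by
  refine ⟨fun _ => Relation.ReflTransGen.refl, ?_, fun h h' => h.trans h'⟩
  intro a b h
  induction h with
  | refl => exact Relation.ReflTransGen.refl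
  | tail _ hbc ih => exact Relation.ReflTransGen.head ⟨hbc.2.1, hbc.1, hbc.2.2.symm⟩ ih

/-- `E(α) = min_i (ε - d(x_i, x_{i+1}))`. -/
def chainE (ε : ℝ) (l : List X) : ℝ :=
  sInf {r | ∃ (i : ℕ) (h : i + 1 < l.length),
    r = ε - dist (l.get ⟨i, by omega⟩) (l.get ⟨i + 1, h⟩)}

variable {ε : ℝ}

lemma Move.head?_eq {a b : List X} (h : Move ε a b) : a.head? = b.head? := by
  obtain ⟨_, _, ⟨p, s, x, hp, hs, rfl, rfl⟩ | ⟨p, s, x, hp, hs, rfl, rfl⟩⟩ := h <;>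
    cases p <;> simp_all

lemma EpsHomotopic.head?_eq {a b : List X} (h : EpsHomotopic ε a b) : a.head? = b.head? := by
  induction h with
  | refl => rfl
  | tail _ hmove ih => exact ih.trans hmove.head?_eq

lemma Move.cons {a b : List X} (h : Move ε a b) (c : X) (hc : ∀ y ∈ a.head?, dist c y < ε) :
    Move ε (c :: a) (c :: b) := by
  have hhead := h.head?_eq
  obtain ⟨⟨-, ha⟩, ⟨-, hb⟩, hins⟩ := h
  refine ⟨⟨List.cons_ne_nil _ _, List.isChain_cons.mpr ⟨hc, ha⟩⟩,
    ⟨List.cons_ne_nil _ _, List.isChain_cons.mpr ⟨hhead ▸ hc, hb⟩⟩, ?_⟩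
  rcases hins with ⟨p, s, x, -, hs, rfl, rfl⟩ | ⟨p, s, x, -, hs, rfl, rfl⟩
  · exact Or.inl ⟨c :: p, s, x, List.cons_ne_nil _ _, hs, rfl, rfl⟩
  · exact Or.inr ⟨c :: p, s, x, List.cons_ne_nil _ _, hs, rfl, rfl⟩

lemma EpsHomotopic.cons {a b : List X} (h : EpsHomotopic ε a b) (c : X)
    (hc : ∀ y ∈ a.head?, dist c y < ε) : EpsHomotopic ε (c :: a) (c :: b) := by
  induction h with
  | refl => exact .refl
  | tail hab hmove ih => exact ih.tail (hmove.cons c (EpsHomotopic.head?_eq hab ▸ hc))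

lemma epsHomotopic_replace {p s : List X} {x y : X} (hp : p ≠ []) (hs : s ≠ [])
    (hx : IsEpsChain ε (p ++ x :: s)) (hyx : IsEpsChain ε (p ++ y :: x :: s))
    (hy : IsEpsChain ε (p ++ y :: s)) :
    EpsHomotopic ε (p ++ x :: s) (p ++ y :: s) :=
  have hinsert : Move ε (p ++ x :: s) (p ++ y :: x :: s) :=
    ⟨hx, hyx, Or.inl ⟨p, x :: s, y, hp, List.cons_ne_nil _ _, rfl, rfl⟩⟩
  have herase : Move ε (p ++ y :: x :: s) (p ++ y :: s) :=
    ⟨hyx, hy, Or.inr ⟨p ++ [y], s, x, by simp, hs, by simp, by simp⟩⟩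
  (Relation.ReflTransGen.single hinsert).tail herase

lemma isChain_dist_lt_of_forall₂ {e : ℝ} {l l' : List X}
    (hl : l.IsChain (fun a b => dist a b ≤ ε - e))
    (hll' : List.Forall₂ (fun u v => dist u v < e / 2) l l') :
    l'.IsChain (fun a b => dist a b < ε) := by
  induction hll' with
  | nil => exact .nil
  | @cons x y t t' hxy htt' ih =>
    refine List.isChain_cons.mpr ⟨?_, ih hl.tail⟩
    rcases htt' with _ | @⟨x', y', _, _, hx'y', -⟩
    · simp
    · rintro _ ⟨⟩
      have hxx' := (List.isChain_cons_cons.mp hl).1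
      calc dist y y' ≤ dist y x + dist x x' + dist x' y' := dist_triangle4 _ _ _ _
        _ < e / 2 + (ε - e) + e / 2 := by rw [dist_comm] at hxy; linarith
        _ = ε := by ring

theorem epsHomotopic_of_forall₂ {e : ℝ} (he : 0 < e) {p x y : X} {αt βt : List X}
    (hpx : dist p x < ε) (hβ : (p :: y :: βt).IsChain (fun a b => dist a b < ε))
    (hα : (x :: αt).IsChain (fun a b => dist a b ≤ ε - e))
    (hαβ : List.Forall₂ (fun u v => dist u v < e / 2) (x :: αt) (y :: βt))
    (hlast : (x :: αt).getLast? = (y :: βt).getLast?) :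
    EpsHomotopic ε (p :: x :: αt) (p :: y :: βt) := by
  induction αt generalizing p x y βt with
  | nil =>
    rcases hαβ with _ | ⟨-, ⟨⟩⟩
    cases Option.some_inj.mp hlast
    exact .refl
  | cons x₁ αt ih =>
    rcases βt with _ | ⟨y₁, βt⟩
    · rcases hαβ with _ | ⟨-, ⟨⟩⟩
    obtain ⟨hxy, hαβ⟩ := List.forall₂_cons.mp hαβ
    obtain ⟨hpy, hβ'⟩ := List.isChain_cons_cons.mp hβ
    obtain ⟨hxx₁, hα'⟩ := List.isChain_cons_cons.mp hα
    have hα_lt : (x :: x₁ :: αt).IsChain (fun a b => dist a b < ε) :=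
      hα.imp fun a b h => by linarith
    have hyx : dist y x < ε := by rw [dist_comm]; linarith [dist_nonneg (x := x) (y := x₁)]
    have hyx₁ : dist y x₁ < ε := by linarith [dist_triangle y x x₁, dist_comm x y]
    have hreplace : EpsHomotopic ε (p :: x :: x₁ :: αt) (p :: y :: x₁ :: αt) :=
      epsHomotopic_replace (p := [p]) (List.cons_ne_nil _ _) (List.cons_ne_nil _ _)
        ⟨List.cons_ne_nil _ _, List.isChain_cons_cons.mpr ⟨hpx, hα_lt⟩⟩
        ⟨List.cons_ne_nil _ _, List.isChain_cons_cons.mpr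
          ⟨hpy, List.isChain_cons_cons.mpr ⟨hyx, hα_lt⟩⟩⟩
        ⟨List.cons_ne_nil _ _, List.isChain_cons_cons.mpr
          ⟨hpy, List.isChain_cons_cons.mpr ⟨hyx₁, hα_lt.tail⟩⟩⟩
    have htail := ih hyx₁ hβ' hα' hαβ (by simpa using hlast)
    exact hreplace.trans (htail.cons p (by simpa using hpy))

lemma chainE_set_finite (l : List X) :
    {r | ∃ (i : ℕ) (h : i + 1 < l.length),
      r = ε - dist (l.get ⟨i, by omega⟩) (l.get ⟨i + 1, h⟩)}.Finite := by
  refine (Set.finite_range fun i : Fin (l.length - 1) =>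
    ε - dist (l.get ⟨i, by omega⟩) (l.get ⟨i + 1, by omega⟩)).subset ?_
  rintro r ⟨i, h, rfl⟩
  exact ⟨⟨i, by omega⟩, rfl⟩

lemma chainE_pos {l : List X} (hl : 2 ≤ l.length) (hc : l.IsChain (fun a b => dist a b < ε)) :
    0 < chainE ε l := by
  refine (Set.Finite.lt_csInf_iff (chainE_set_finite l) ⟨_, 0, by omega, rfl⟩).mpr ?_
  rintro r ⟨i, h, rfl⟩
  have := List.isChain_iff_getElem.mp hc i h
  simp only [List.get_eq_getElem]
  linarith

lemma isChain_dist_le_sub_chainE (l : List X) :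
    l.IsChain (fun a b => dist a b ≤ ε - chainE ε l) := by
  refine List.isChain_iff_getElem.mpr fun i hi => ?_
  have := csInf_le (chainE_set_finite (ε := ε) l).bddBelow ⟨i, hi, rfl⟩
  simp only [chainE, List.get_eq_getElem] at this ⊢
  linarith

/-- Uniformly close chains with the same endpoints are ε-homotopic. -/
theorem statement0 (ε : ℝ) (α β : List X)
    (hα : IsEpsChain ε α) (hlen : β.length = α.length)
    (hhead : β.head? = α.head?) (hlast : β.getLast? = α.getLast?)
    (hΔ : ∀ (i : ℕ) (hi : i < α.length),
      dist (α.get ⟨i, hi⟩) (β.get ⟨i, by omega⟩) < chainE ε α / 2) :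
    IsEpsChain ε β ∧ EpsHomotopic ε α β := by
  have hαβ : List.Forall₂ (fun u v => dist u v < chainE ε α / 2) α β :=
    List.forall₂_iff_get.mpr ⟨hlen.symm, fun i hi _ => hΔ i hi⟩
  rcases α with _ | ⟨p, _ | ⟨x, αt⟩⟩
  · exact absurd rfl hα.1
  · obtain ⟨p', -, rfl⟩ := List.length_eq_one_iff.mp hlen
    cases Option.some_inj.mp hhead
    exact ⟨hα, .refl⟩
  · have he := chainE_pos (by simp) hα.2
    have hβ := isChain_dist_lt_of_forall₂ (isChain_dist_le_sub_chainE _) hαβ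
    rcases hαβ with _ | @⟨_, q, _, _, -, hαβ⟩
    rcases hαβ with _ | @⟨_, y, _, βt, hxy, hαβ⟩
    cases Option.some_inj.mp hhead
    refine ⟨⟨List.cons_ne_nil _ _, hβ⟩, ?_⟩
    exact epsHomotopic_of_forall₂ he (List.isChain_cons_cons.mp hα.2).1 hβ
      (isChain_dist_le_sub_chainE _).tail (.cons hxy hαβ) (by simpa using hlast.symm)
end
end

section
/- Suppose X and Y are metric spaces with groups H and K acting on X and Y respectively by isometries with closed orbits, φ : H → K is a surjective group homomorphism, and f : X → Y is a σ-isometry (for a first degree polynomial σ with non-negative coefficients) that is equivariant with respect to φ (i.e., f(h(x)) = φ(h)(f(x)) for all h ∈ H, x ∈ X). Then the induced map f_π : X/H → Y/K defined by f_π(Hx) = K f(x) is a σ-isometry with respect to the quotient metrics d(Hx, Hy) = inf{ d(x, h(y)) : h ∈ H }. -/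
/-!
In the quotient metrics, `d(x, y)` and `d(f x, f y)` are replaced by infima over the orbit of `y`.
By equivariance and surjectivity of `φ`, the second infimum runs over the same index set `H` as
the first, namely over the values `d(f x, f (h • y))`. The termwise distortion bound
`(1 - m) d - c ≤ d' ≤ (1 + m) d + c` then passes to the infima; for `m > 1` the lower bound is
just nonnegativity.
-/

noncomputable section
open Metric

variable {X : Type*} [MetricSpace X]

/-- `f` is a σ-isometry for the first degree polynomial `σ(t) = m t + b`:
distortion at most `σ`, and image a `σ(0)`-net. -/
def IsPolyIsometry {A B : Type*} [MetricSpace A] [MetricSpace B]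
    (m c : ℝ) (f : A → B) : Prop :=
  (∀ x y : A, |dist x y - dist (f x) (f y)| ≤ m * dist x y + c) ∧
  ∀ z : B, ∃ w : A, dist z (f w) ≤ c

/-- The quotient pseudo-metric `d(Gx, Gy) = inf { d(x, g • y) : g ∈ G }`. -/
def qdist (G : Type*) [Group G] {A : Type*} [MetricSpace A] [MulAction G A]
    (x y : A) : ℝ :=
  sInf (Set.range fun g : G => dist x (g • y))

section InfDistortion

variable {ι : Type*} [Nonempty ι] {a b : ι → ℝ} {m c : ℝ}

theorem ciInf_le_mul_ciInf_add {k : ℝ} (hk : 0 < k) (hb : BddBelow (Set.range b))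
    (h : ∀ i, b i ≤ k * a i + c) : ⨅ i, b i ≤ k * (⨅ i, a i) + c := by
  have : ((⨅ i, b i) - c) / k ≤ ⨅ i, a i :=
    le_ciInf fun i => (div_le_iff₀' hk).2 (by linarith [ciInf_le hb i, h i])
  rw [div_le_iff₀' hk] at this
  linarith

theorem mul_ciInf_sub_le_ciInf (ha : ∀ i, 0 ≤ a i) (hb : ∀ i, 0 ≤ b i) (hc : 0 ≤ c)
    (h : ∀ i, (1 - m) * a i - c ≤ b i) : (1 - m) * (⨅ i, a i) - c ≤ ⨅ i, b i := by
  refine le_ciInf fun i => ?_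
  rcases le_total m 1 with hm1 | hm1
  · have hinf : ⨅ i, a i ≤ a i := ciInf_le ⟨0, Set.forall_mem_range.2 ha⟩ i
    linarith [mul_le_mul_of_nonneg_left hinf (sub_nonneg.2 hm1), h i]
  · linarith [mul_nonpos_of_nonpos_of_nonneg (sub_nonpos.2 hm1) (Real.iInf_nonneg ha), hb i]

theorem abs_ciInf_sub_ciInf_le (ha : ∀ i, 0 ≤ a i) (hb : ∀ i, 0 ≤ b i) (hm : 0 ≤ m)
    (hc : 0 ≤ c) (h : ∀ i, |a i - b i| ≤ m * a i + c) :
    |(⨅ i, a i) - ⨅ i, b i| ≤ m * (⨅ i, a i) + c := by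
  have hupper : ⨅ i, b i ≤ (1 + m) * (⨅ i, a i) + c :=
    ciInf_le_mul_ciInf_add (by linarith) ⟨0, Set.forall_mem_range.2 hb⟩
      fun i => by linarith [(abs_le.1 (h i)).1]
  have hlower : (1 - m) * (⨅ i, a i) - c ≤ ⨅ i, b i :=
    mul_ciInf_sub_le_ciInf ha hb hc fun i => by linarith [(abs_le.1 (h i)).2]
  rw [abs_sub_le_iff]
  constructor <;> linarith

end InfDistortion

section QuotientDist

variable (G : Type*) [Group G] {A : Type*} [MetricSpace A] [MulAction G A]

theorem qdist_le_dist_smul (x y : A) (g : G) : qdist G x y ≤ dist x (g • y) :=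
  ciInf_le ⟨0, Set.forall_mem_range.2 fun _ => dist_nonneg⟩ g

theorem qdist_le_dist (x y : A) : qdist G x y ≤ dist x y := by
  simpa using qdist_le_dist_smul G x y 1

end QuotientDist

theorem qdist_map_eq_iInf {H K A B : Type*} [Group H] [Group K] [MetricSpace A] [MetricSpace B]
    [MulAction H A] [MulAction K B] {φ : H →* K} (hφ : Function.Surjective φ) {f : A → B}
    (heqv : ∀ (h : H) (x : A), f (h • x) = φ h • f x) (x y : A) :
    qdist K (f x) (f y) = ⨅ h : H, dist (f x) (f (h • y)) := by
  simp only [heqv]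
  exact (hφ.iInf_comp fun k => dist (f x) (k • f y)).symm

theorem statement6_general {Y : Type*} [MetricSpace Y] {H K : Type*} [Group H] [Group K]
    [MulAction H X] [MulAction K Y]
    (φ : H →* K) (hφ : Function.Surjective φ)
    (f : X → Y) (m c : ℝ) (hm : 0 ≤ m) (hc : 0 ≤ c)
    (hf : IsPolyIsometry m c f)
    (heqv : ∀ (h : H) (x : X), f (h • x) = φ h • f x) :
    (∀ x y : X, |qdist H x y - qdist K (f x) (f y)| ≤ m * qdist H x y + c) ∧
    ∀ z : Y, ∃ w : X, qdist K z (f w) ≤ c := by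
  refine ⟨fun x y => ?_, fun z => ?_⟩
  · rw [qdist_map_eq_iInf hφ heqv]
    exact abs_ciInf_sub_ciInf_le (fun _ => dist_nonneg) (fun _ => dist_nonneg) hm hc
      fun h => hf.1 x (h • y)
  · obtain ⟨w, hw⟩ := hf.2 z
    exact ⟨w, (qdist_le_dist K z (f w)).trans hw⟩

/-- An equivariant σ-isometry induces a σ-isometry of the quotients by
isometric group actions with closed orbits. -/
theorem statement6 {Y : Type*} [MetricSpace Y] {H K : Type*} [Group H] [Group K]
    [MulAction H X] [MulAction K Y]
    (hH : ∀ (h : H) (x y : X), dist (h • x) (h • y) = dist x y)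
    (hK : ∀ (k : K) (x y : Y), dist (k • x) (k • y) = dist x y)
    (hHc : ∀ x : X, IsClosed (MulAction.orbit H x))
    (hKc : ∀ y : Y, IsClosed (MulAction.orbit K y))
    (φ : H →* K) (hφ : Function.Surjective φ)
    (f : X → Y) (m c : ℝ) (hm : 0 ≤ m) (hc : 0 ≤ c)
    (hf : IsPolyIsometry m c f)
    (heqv : ∀ (h : H) (x : X), f (h • x) = φ h • f x) :
    (∀ x y : X, |qdist H x y - qdist K (f x) (f y)| ≤ m * qdist H x y + c) ∧
    ∀ z : Y, ∃ w : X, qdist K z (f w) ≤ c :=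
  statement6_general φ hφ f m c hm hc hf heqv
end
end
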